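/- Let C = { (z,M) ∈ ℝ^d × Sym(d,ℝ) : (1/2)·(z ⊗ z) + M ≤ Id }. Its support function χ_C*(θ, S) := sup { ⟨θ,z⟩ + ⟨S,M⟩ : (z,M) ∈ C } equals Tr S + (1/2)⟨S q, q⟩ if S is positive semi-definite and θ = S q for some q ∈ ℝ^d, and equals +∞ if S is not positive semi-definite or θ is not in the image of S. Moreover the value Tr S + (1/2)⟨S q, q⟩ does not depend on the choice of q with Sq = θ. -/

import Mathlib

/-!
If `S ≥ 0` and `S q = θ`, then for `(z, M) ∈ C` the two inequalities
`tr (S (Id - z ⊗ z / 2 - M)) ≥ 0` and `⟨S (q - z), q - z⟩ ≥ 0` add up to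
`⟨θ, z⟩ + ⟨S, M⟩ ≤ Tr S + ⟨S q, q⟩ / 2`, with equality at `(q, Id - q ⊗ q / 2)`.
Otherwise the pairing is unbounded along a ray in `C`: if `⟨S v, v⟩ < 0`, along `(0, -t v ⊗ v)`;
if `θ ∉ range S = (ker S)ᗮ`, along `(t w, -t² / 2 w ⊗ w)` for some `w ∈ ker S` with `⟨θ, w⟩ > 0`.
-/

open Matrix

namespace Matrix

variable {n : Type*} [Fintype n]

lemma trace_mul_vecMulVec_self (S : Matrix n n ℝ) (z : n → ℝ) :
    (S * vecMulVec z z).trace = S *ᵥ z ⬝ᵥ z := by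
  rw [mul_vecMulVec, trace_vecMulVec]

lemma IsSymm.mulVec_dotProduct_comm {S : Matrix n n ℝ} (hS : S.IsSymm) (a b : n → ℝ) :
    S *ᵥ a ⬝ᵥ b = S *ᵥ b ⬝ᵥ a := by
  rw [dotProduct_comm, dotProduct_mulVec, ← mulVec_transpose, hS.eq]

open scoped MatrixOrder in
lemma PosSemidef.trace_mul_nonneg [DecidableEq n] {A B : Matrix n n ℝ} (hA : A.PosSemidef)
    (hB : B.PosSemidef) : 0 ≤ (A * B).trace := by
  obtain ⟨C, rfl⟩ := CStarAlgebra.nonneg_iff_eq_star_mul_self.mp hA.nonneg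
  rw [star_eq_conjTranspose, Matrix.mul_assoc, trace_mul_comm]
  exact (hB.mul_mul_conjTranspose_same C).trace_nonneg

lemma posSemidef_vecMulVec_self (v : n → ℝ) : (vecMulVec v v).PosSemidef := by
  simpa using posSemidef_vecMulVec_self_star v

lemma IsSymm.exists_mulVec_eq_of_forall_ker [DecidableEq n] {S : Matrix n n ℝ} (hS : S.IsSymm)
    {θ : n → ℝ} (h : ∀ v, S *ᵥ v = 0 → θ ⬝ᵥ v = 0) : ∃ q, S *ᵥ q = θ := by
  set T := toEuclideanLin S
  have hT : T.IsSymmetric := isSymmetric_toEuclideanLin_iff.mpr (isHermitian_iff_isSymm.mpr hS)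
  have hθ : WithLp.toLp 2 θ ∈ (LinearMap.ker T)ᗮ := by
    intro v hv
    have : S *ᵥ v.ofLp = 0 := by simpa [T] using congrArg WithLp.ofLp hv
    simpa [PiLp.inner_apply, dotProduct, mul_comm] using h _ this
  rw [← hT.orthogonal_range, Submodule.orthogonal_orthogonal] at hθ
  obtain ⟨q, hq⟩ := hθ
  exact ⟨q.ofLp, by simpa [T] using congrArg WithLp.ofLp hq⟩

lemma isSymm_vecMulVec_self (v : n → ℝ) : (vecMulVec v v).IsSymm :=
  isHermitian_iff_isSymm.mp (posSemidef_vecMulVec_self v).isHermitian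

lemma IsSymm.mulVec_dotProduct_eq_of_mulVec_eq {S : Matrix n n ℝ} (hS : S.IsSymm)
    {θ q₁ q₂ : n → ℝ} (h₁ : S *ᵥ q₁ = θ) (h₂ : S *ᵥ q₂ = θ) : S *ᵥ q₁ ⬝ᵥ q₁ = S *ᵥ q₂ ⬝ᵥ q₂ :=
  calc S *ᵥ q₁ ⬝ᵥ q₁ = S *ᵥ q₂ ⬝ᵥ q₁ := by rw [h₁, h₂]
    _ = S *ᵥ q₁ ⬝ᵥ q₂ := hS.mulVec_dotProduct_comm q₂ q₁
    _ = S *ᵥ q₂ ⬝ᵥ q₂ := by rw [h₁, h₂]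

end Matrix

lemma not_bddAbove_image_of_ray {α : Type*} {f : α → ℝ} {s : Set α} {c : ℝ} (hc : 0 < c)
    (p : ℝ → α) (hp : ∀ t, 0 ≤ t → p t ∈ s) (hf : ∀ t, f (p t) = c * t) :
    ¬ BddAbove (f '' s) := by
  rintro ⟨b, hb⟩
  have ht : 0 ≤ (|b| + 1) / c := by positivity
  have := hb ⟨p _, hp _ ht, rfl⟩
  rw [hf, mul_div_cancel₀ _ hc.ne'] at this
  linarith [le_abs_self b]

section ConstraintSet

variable {n : Type*} [Fintype n] [DecidableEq n]

def constraintSet (n : Type*) [Fintype n] [DecidableEq n] : Set ((n → ℝ) × Matrix n n ℝ) :=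
  {p | p.2.IsSymm ∧ (1 - ((1/2 : ℝ) • vecMulVec p.1 p.1 + p.2)).PosSemidef}

/-- The Frobenius product `⟨S, M⟩ = tr (Sᵀ M)` is written `tr (S M)`; they agree for
symmetric `S`. -/
def dualPairing (θ : n → ℝ) (S : Matrix n n ℝ) (p : (n → ℝ) × Matrix n n ℝ) : ℝ :=
  θ ⬝ᵥ p.1 + (S * p.2).trace

lemma dualPairing_le_of_mem {θ q : n → ℝ} {S : Matrix n n ℝ} (hS : S.PosSemidef)
    (hq : S *ᵥ q = θ) {p : (n → ℝ) × Matrix n n ℝ} (hp : p ∈ constraintSet n) :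
    dualPairing θ S p ≤ S.trace + 1/2 * (S *ᵥ q ⬝ᵥ q) := by
  obtain ⟨z, M⟩ := p
  have hslack : 0 ≤ (S * (1 - ((1/2 : ℝ) • vecMulVec z z + M))).trace := hS.trace_mul_nonneg hp.2
  have hquad : 0 ≤ S *ᵥ (q - z) ⬝ᵥ (q - z) := by
    simpa [dotProduct_comm] using hS.dotProduct_mulVec_nonneg (q - z)
  have hsymm : S *ᵥ z ⬝ᵥ q = S *ᵥ q ⬝ᵥ z :=
    (isHermitian_iff_isSymm.mp hS.isHermitian).mulVec_dotProduct_comm z q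
  simp only [Matrix.mul_sub, Matrix.mul_add, Matrix.mul_smul, Matrix.mul_one, trace_sub,
    trace_add, trace_smul, trace_mul_vecMulVec_self, smul_eq_mul] at hslack
  simp only [mulVec_sub, sub_dotProduct, dotProduct_sub, hsymm] at hquad
  rw [dualPairing, ← hq]
  linarith

lemma isGreatest_dualPairing {S : Matrix n n ℝ} (hS : S.PosSemidef) (q : n → ℝ) :
    IsGreatest (dualPairing (S *ᵥ q) S '' constraintSet n) (S.trace + 1/2 * (S *ᵥ q ⬝ᵥ q)) := by
  refine ⟨⟨(q, 1 - (1/2 : ℝ) • vecMulVec q q), ⟨?_, ?_⟩, ?_⟩, ?_⟩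
  · exact isSymm_one.sub ((isSymm_vecMulVec_self q).smul _)
  · simpa using PosSemidef.zero
  · simp only [dualPairing, Matrix.mul_sub, Matrix.mul_one, Matrix.mul_smul, trace_sub, trace_smul,
      trace_mul_vecMulVec_self, smul_eq_mul]
    ring
  · rintro _ ⟨p, hp, rfl⟩
    exact dualPairing_le_of_mem hS rfl hp

lemma not_bddAbove_dualPairing_of_not_posSemidef {θ : n → ℝ} {S : Matrix n n ℝ}
    (hS : S.IsSymm) (hpsd : ¬ S.PosSemidef) : ¬ BddAbove (dualPairing θ S '' constraintSet n) := by
  obtain ⟨v, hv⟩ : ∃ v, S *ᵥ v ⬝ᵥ v < 0 := by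
    contrapose! hpsd
    exact .of_dotProduct_mulVec_nonneg (isHermitian_iff_isSymm.mpr hS)
      fun x => by simpa [dotProduct_comm] using hpsd x
  refine not_bddAbove_image_of_ray (neg_pos.mpr hv) (fun t => (0, (-t) • vecMulVec v v))
    (fun t ht => ⟨(isSymm_vecMulVec_self v).smul _, ?_⟩) (fun t => ?_)
  · have : 1 - ((1/2 : ℝ) • vecMulVec 0 0 + (-t) • vecMulVec v v) = 1 + t • vecMulVec v v := by
      simp [sub_eq_add_neg]
    rw [this]
    exact PosSemidef.one.add ((posSemidef_vecMulVec_self v).smul ht)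
  · simp only [dualPairing, dotProduct_zero, zero_add, Matrix.mul_smul, trace_smul,
      trace_mul_vecMulVec_self, smul_eq_mul]
    ring

lemma not_bddAbove_dualPairing_of_forall_mulVec_ne {θ : n → ℝ} {S : Matrix n n ℝ}
    (hS : S.IsSymm) (hθ : ∀ q, S *ᵥ q ≠ θ) : ¬ BddAbove (dualPairing θ S '' constraintSet n) := by
  obtain ⟨v, hSv, hθv⟩ : ∃ v, S *ᵥ v = 0 ∧ θ ⬝ᵥ v ≠ 0 := by
    by_contra! h
    exact (hS.exists_mulVec_eq_of_forall_ker h).elim hθ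
  set w := (θ ⬝ᵥ v) • v
  refine not_bddAbove_image_of_ray (c := (θ ⬝ᵥ v) ^ 2) (by positivity)
    (fun t => (t • w, (-(t ^ 2 / 2)) • vecMulVec w w))
    (fun t _ => ⟨(isSymm_vecMulVec_self w).smul _, ?_⟩) (fun t => ?_)
  · have : 1 - ((1/2 : ℝ) • vecMulVec (t • w) (t • w) + (-(t ^ 2 / 2)) • vecMulVec w w) = 1 := by
      rw [smul_vecMulVec, vecMulVec_smul]
      module
    rw [this]
    exact PosSemidef.one
  · simp only [dualPairing, Matrix.mul_smul, trace_smul, trace_mul_vecMulVec_self, w, mulVec_smul,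
      hSv, smul_zero, zero_dotProduct, dotProduct_smul, smul_eq_mul]
    ring

end ConstraintSet

theorem stmt3 {d : ℕ} (θ : Fin d → ℝ) (S : Matrix (Fin d) (Fin d) ℝ) (hS : S.IsSymm) :
    (∀ q : Fin d → ℝ, S.PosSemidef → S.mulVec q = θ →
      IsGreatest
        ((fun p : (Fin d → ℝ) × Matrix (Fin d) (Fin d) ℝ => θ ⬝ᵥ p.1 + (S * p.2).trace) ''
          {p | p.2.IsSymm ∧ ((1 : Matrix (Fin d) (Fin d) ℝ) -
            ((1/2 : ℝ) • Matrix.vecMulVec p.1 p.1 + p.2)).PosSemidef})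
        (S.trace + (1/2) * (S.mulVec q ⬝ᵥ q))) ∧
    ((¬ S.PosSemidef ∨ ∀ q : Fin d → ℝ, S.mulVec q ≠ θ) →
      ¬ BddAbove
        ((fun p : (Fin d → ℝ) × Matrix (Fin d) (Fin d) ℝ => θ ⬝ᵥ p.1 + (S * p.2).trace) ''
          {p | p.2.IsSymm ∧ ((1 : Matrix (Fin d) (Fin d) ℝ) -
            ((1/2 : ℝ) • Matrix.vecMulVec p.1 p.1 + p.2)).PosSemidef})) ∧
    (∀ q₁ q₂ : Fin d → ℝ, S.mulVec q₁ = θ → S.mulVec q₂ = θ →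
      S.trace + (1/2) * (S.mulVec q₁ ⬝ᵥ q₁) = S.trace + (1/2) * (S.mulVec q₂ ⬝ᵥ q₂)) := by
  refine ⟨fun q hpsd hq => ?_, fun h => ?_, fun q₁ q₂ h₁ h₂ => ?_⟩
  · subst hq
    exact isGreatest_dualPairing hpsd q
  · rcases h with hpsd | hθ
    · exact not_bddAbove_dualPairing_of_not_posSemidef hS hpsd
    · exact not_bddAbove_dualPairing_of_forall_mulVec_ne hS hθ
  · rw [hS.mulVec_dotProduct_eq_of_mulVec_eq h₁ h₂]
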